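/- arXiv:2211.03347 — 6 statements merged into one kernel-verified Lean document; each statement's English description precedes it below -/
import Mathlib

section
/- If γ ≥ 4/3, then for every real number M > 0 there exists a unique R ∈ (r₀, ∞) such that 4πĀ ∫_{r₀}^{R} (1/r − 1/R)^{1/(γ−1)} r² dr = M; in particular M(R) → 0 as R → r₀⁺ and M(R) → ∞ as R → ∞. -/
/-!
Write p = 1/(γ - 1), so that M(R) = 4πĀ·I(R) with I(R) = ∫_{r₀}^R (1/r - 1/R)^p r² dr.
The integrand grows with R and the domain grows with R, so I is strictly increasing on [r₀, ∞);
it is continuous there and I(r₀) = 0. On [r₀, R/2] one has 1/r - 1/R ≥ 1/(2r), hence the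
integrand is at least 2^{-p} r^{2-p} ≥ 2^{-p} r₀^{3-p}/r as long as p ≤ 3, i.e. γ ≥ 4/3, so
I(R) grows at least like log R. The intermediate value theorem and strict monotonicity then give
existence and uniqueness of R with M(R) = m.
-/

open Real Set Filter MeasureTheory

theorem StrictMonoOn.existsUnique_eq_of_tendsto_atTop {α δ : Type*}
    [ConditionallyCompleteLinearOrder α] [TopologicalSpace α] [OrderTopology α]
    [DenselyOrdered α] [LinearOrder δ] [TopologicalSpace δ] [OrderClosedTopology δ]
    {f : α → δ} {a : α} {m : δ} (hmono : StrictMonoOn f (Ici a))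
    (hcont : ContinuousOn f (Ici a)) (hm : f a < m) (htop : Tendsto f atTop atTop) :
    ∃! x, a < x ∧ f x = m := by
  obtain ⟨b, hmb, hab⟩ := ((htop.eventually_ge_atTop m).and (eventually_ge_atTop a)).exists
  obtain ⟨x, hx, rfl⟩ := intermediate_value_Ioc hab (hcont.mono Icc_subset_Ici_self) ⟨hm, hmb⟩
  exact ⟨x, ⟨hx.1, rfl⟩, fun y hy => hmono.injOn hy.1.le hx.1.le hy.2⟩

noncomputable def massIntegral (p r₀ R : ℝ) : ℝ :=
  ∫ r in r₀..R, (1 / r - 1 / R) ^ p * r ^ 2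

section

variable {p r₀ : ℝ}

lemma intervalIntegrable_massIntegrand (hp : 0 ≤ p) (R : ℝ) {a b : ℝ} (ha : 0 < a) (hb : 0 < b) :
    IntervalIntegrable (fun r : ℝ => (1 / r - 1 / R) ^ p * r ^ 2) volume a b := by
  refine ContinuousOn.intervalIntegrable fun r hr => ?_
  have hr0 : r ≠ 0 := (lt_min ha hb |>.trans_le hr.1).ne'
  exact ((continuousAt_const.div continuousAt_id hr0).sub continuousAt_const |>.rpow_const
    (Or.inr hp) |>.mul (continuousAt_id.pow 2)).continuousWithinAt

lemma continuousOn_massIntegral (hp : 0 ≤ p) (hr₀ : 0 < r₀) :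
    ContinuousOn (massIntegral p r₀) (Ici r₀) := by
  -- Clamping at r₀ makes the integrand jointly continuous without changing it for r₀ ≤ r ≤ R.
  have hclamp : ∀ x : ℝ, max x r₀ ≠ 0 := fun x => (hr₀.trans_le (le_max_right x r₀)).ne'
  have hG : Continuous (Function.uncurry fun R r : ℝ =>
      (1 / max r r₀ - 1 / max R r₀) ^ p * max r r₀ ^ 2) := by
    fun_prop (disch := first | exact hp | exact fun _ => hclamp _)
  refine (intervalIntegral.continuous_parametric_intervalIntegral_of_continuous (μ := volume)
    (a₀ := r₀) hG continuous_id).continuousOn.congr fun R (hR : r₀ ≤ R) => ?_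
  refine intervalIntegral.integral_congr fun r hr => ?_
  rw [uIcc_of_le hR] at hr
  simp only [max_eq_left hr.1, max_eq_left hR]

lemma strictMonoOn_massIntegral (hp : 0 ≤ p) (hr₀ : 0 < r₀) :
    StrictMonoOn (massIntegral p r₀) (Ici r₀) := by
  intro a (ha : r₀ ≤ a) b (hb : r₀ ≤ b) hab
  have ha0 : 0 < a := hr₀.trans_le ha
  have hb0 : 0 < b := hr₀.trans_le hb
  have hle : massIntegral p r₀ a ≤ ∫ r in r₀..a, (1 / r - 1 / b) ^ p * r ^ 2 := by
    refine intervalIntegral.integral_mono_on ha (intervalIntegrable_massIntegrand hp a hr₀ ha0)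
      (intervalIntegrable_massIntegrand hp b hr₀ ha0) fun r hr => ?_
    have hr0 : 0 < r := hr₀.trans_le hr.1
    gcongr
    exact sub_nonneg.2 (one_div_le_one_div_of_le hr0 hr.2)
  have hpos : 0 < ∫ r in a..b, (1 / r - 1 / b) ^ p * r ^ 2 := by
    refine intervalIntegral.intervalIntegral_pos_of_pos_on
      (intervalIntegrable_massIntegrand hp b ha0 hb0) (fun r hr => ?_) hab
    have hr0 : 0 < r := ha0.trans hr.1
    have : 0 < 1 / r - 1 / b := sub_pos.2 (one_div_lt_one_div_of_lt hr0 hr.2)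
    positivity
  have hsplit := intervalIntegral.integral_add_adjacent_intervals
    (intervalIntegrable_massIntegrand hp b hr₀ ha0) (intervalIntegrable_massIntegrand hp b ha0 hb0)
  unfold massIntegral at *
  rw [← hsplit]
  linarith

lemma half_inv_rpow_mul_sq {x : ℝ} (hx : 0 < x) :
    (1 / (2 * x)) ^ p * x ^ 2 = (1 / 2) ^ p * x ^ (3 - p) * x⁻¹ := by
  rw [show 1 / (2 * x) = 1 / 2 * x⁻¹ by ring, mul_rpow (by norm_num) (by positivity),
    inv_rpow hx.le, rpow_sub hx, rpow_ofNat]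
  field_simp

lemma log_le_massIntegral (hp : 0 ≤ p) (hp3 : p ≤ 3) (hr₀ : 0 < r₀) {R : ℝ} (hR : 2 * r₀ ≤ R) :
    (1 / 2) ^ p * r₀ ^ (3 - p) * log (R / 2 / r₀) ≤ massIntegral p r₀ R := by
  have hmid : r₀ ≤ R / 2 := by linarith
  have hmid0 : 0 < R / 2 := hr₀.trans_le hmid
  have hpoint : ∀ x ∈ Icc r₀ (R / 2),
      (1 / 2) ^ p * r₀ ^ (3 - p) * x⁻¹ ≤ (1 / x - 1 / R) ^ p * x ^ 2 := by
    intro x ⟨hx₀, hxR⟩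
    have hx : 0 < x := hr₀.trans_le hx₀
    have hhalf : 1 / (2 * x) ≤ 1 / x - 1 / R := by
      have : 1 / R ≤ 1 / (2 * x) := one_div_le_one_div_of_le (by positivity) (by linarith)
      have : 1 / x - 1 / (2 * x) = 1 / (2 * x) := by ring
      linarith
    calc (1 / 2) ^ p * r₀ ^ (3 - p) * x⁻¹ ≤ (1 / 2) ^ p * x ^ (3 - p) * x⁻¹ := by gcongr
      _ = (1 / (2 * x)) ^ p * x ^ 2 := (half_inv_rpow_mul_sq hx).symm
      _ ≤ (1 / x - 1 / R) ^ p * x ^ 2 := by gcongr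
  have hinner : (1 / 2) ^ p * r₀ ^ (3 - p) * log (R / 2 / r₀) ≤
      ∫ x in r₀..R / 2, (1 / x - 1 / R) ^ p * x ^ 2 := by
    rw [← integral_inv_of_pos hr₀ hmid0, ← intervalIntegral.integral_const_mul]
    refine intervalIntegral.integral_mono_on hmid ?_
      (intervalIntegrable_massIntegrand hp R hr₀ hmid0) hpoint
    refine (intervalIntegral.intervalIntegrable_inv (fun x hx => ?_) continuousOn_id).const_mul _
    rw [uIcc_of_le hmid] at hx
    exact (hr₀.trans_le hx.1).ne'
  have htail : 0 ≤ ∫ x in R / 2..R, (1 / x - 1 / R) ^ p * x ^ 2 := by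
    refine intervalIntegral.integral_nonneg (by linarith) fun x hx => ?_
    have : 0 ≤ 1 / x - 1 / R := sub_nonneg.2 (one_div_le_one_div_of_le (hmid0.trans_le hx.1) hx.2)
    positivity
  rw [massIntegral, ← intervalIntegral.integral_add_adjacent_intervals
    (intervalIntegrable_massIntegrand hp R hr₀ hmid0)
    (intervalIntegrable_massIntegrand hp R hmid0 (hmid0.trans_le (by linarith)))]
  linarith

lemma tendsto_massIntegral_atTop (hp : 0 ≤ p) (hp3 : p ≤ 3) (hr₀ : 0 < r₀) :
    Tendsto (massIntegral p r₀) atTop atTop := by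
  have hK : 0 < (1 / 2 : ℝ) ^ p * r₀ ^ (3 - p) := by positivity
  refine tendsto_atTop_mono' atTop ?_ (((tendsto_log_atTop.comp
    ((tendsto_id.atTop_div_const two_pos).atTop_div_const hr₀)).const_mul_atTop hK))
  filter_upwards [eventually_ge_atTop (2 * r₀)] with R hR
  exact log_le_massIntegral hp hp3 hr₀ hR

end

theorem stmt_3_general (γ A g₀ r₀ : ℝ) (hγ' : 4 / 3 ≤ γ) (hA : 0 < A) (hg₀ : 0 < g₀)
    (hr₀ : 0 < r₀) :
    let Abar : ℝ := ((γ - 1) * g₀ / (γ * A)) ^ (1 / (γ - 1))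
    let M : ℝ → ℝ := fun R => 4 * π * Abar * ∫ r in r₀..R, (1 / r - 1 / R) ^ (1 / (γ - 1)) * r ^ 2
    (∀ m : ℝ, 0 < m → ∃! R : ℝ, r₀ < R ∧ M R = m) ∧
    Tendsto M (nhdsWithin r₀ (Ioi r₀)) (nhds 0) ∧
    Tendsto M atTop atTop := by
  intro Abar M
  have hγ₁ : 0 < γ - 1 := by linarith
  have hp : 0 ≤ 1 / (γ - 1) := by positivity
  have hp3 : 1 / (γ - 1) ≤ 3 := by rw [div_le_iff₀ hγ₁]; linarith
  have hc : 0 < 4 * π * Abar := mul_pos (by positivity) (rpow_pos_of_pos (by positivity) _)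
  have hcont : ContinuousOn M (Ici r₀) :=
    continuousOn_const.mul (continuousOn_massIntegral hp hr₀)
  have hmono : StrictMonoOn M (Ici r₀) := fun a ha b hb hab =>
    mul_lt_mul_of_pos_left (strictMonoOn_massIntegral hp hr₀ ha hb hab) hc
  have hM₀ : M r₀ = 0 := by simp [M]
  have htop : Tendsto M atTop atTop := (tendsto_massIntegral_atTop hp hp3 hr₀).const_mul_atTop hc
  refine ⟨fun m hm => hmono.existsUnique_eq_of_tendsto_atTop hcont (hM₀ ▸ hm) htop, ?_, htop⟩
  simpa [hM₀] using
    (hcont r₀ (mem_Ici.2 le_rfl)).tendsto.mono_left (nhdsWithin_mono _ Ioi_subset_Ici_self)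

/-- For γ ≥ 4/3, every positive total mass is attained by a unique equilibrium radius R > r₀;
moreover M(R) → 0 as R → r₀⁺ and M(R) → ∞ as R → ∞. -/
theorem stmt_3 (γ A g₀ r₀ : ℝ) (hγ : 1 < γ) (hγ' : 4 / 3 ≤ γ) (hA : 0 < A) (hg₀ : 0 < g₀)
    (hr₀ : 0 < r₀) :
    let Abar : ℝ := ((γ - 1) * g₀ / (γ * A)) ^ (1 / (γ - 1))
    let M : ℝ → ℝ := fun R => 4 * π * Abar * ∫ r in r₀..R, (1 / r - 1 / R) ^ (1 / (γ - 1)) * r ^ 2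
    (∀ m : ℝ, 0 < m → ∃! R : ℝ, r₀ < R ∧ M R = m) ∧
    Tendsto M (nhdsWithin r₀ (Ioi r₀)) (nhds 0) ∧
    Tendsto M atTop atTop :=
  stmt_3_general γ A g₀ r₀ hγ' hA hg₀ hr₀
end

section
/- Hardy-type inequality near a degenerate endpoint: let a < R be real numbers and let k > 1. Then there exists a constant C > 0, depending only on a, R and k, such that for every continuously differentiable function F : [a, R] → ℝ one has ∫_a^R (R−y)^{k−2} F(y)² dy ≤ C ∫_a^R (R−y)^{k} (F(y)² + F′(y)²) dy. -/
/-!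
Differentiating `(R - y) ^ (k - 1) * F y ^ 2`, which vanishes at `y = R` because `k > 1`, gives
`(k - 1) ∫ (R - y) ^ (k - 2) F² = (R - a) ^ (k - 1) F(a)² + ∫ (R - y) ^ (k - 1) 2 F F'`.
By AM-GM the last integral is at most half the left-hand side plus `2 / (k - 1) ∫ (R - y) ^ k F'²`.
The boundary value `F(a)²` is controlled by the trace inequality
`F(a)² (b - a) ≤ (1 + (b - a)) ∫_a^b (F² + F'²)` on an interval `[a, b]` with `b < R`,
where the weight `(R - y) ^ k` is bounded below by `(R - b) ^ k`.
-/

open Real Set MeasureTheory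

variable {a b R k : ℝ} {F F' : ℝ → ℝ}

theorem HasDerivAt.fun_sq {x : ℝ} (h : HasDerivAt F (F' x) x) :
    HasDerivAt (fun y => F y ^ 2) (2 * F x * F' x) x := by
  simpa [mul_assoc] using h.fun_pow 2

theorem intervalIntegrable_rpow_sub_mul {p : ℝ} {g : ℝ → ℝ} (hp : -1 < p) (haR : a ≤ R)
    (hg : ContinuousOn g (Icc a R)) :
    IntervalIntegrable (fun y => (R - y) ^ p * g y) volume a R := by
  have h := ((intervalIntegral.intervalIntegrable_rpow' (a := 0) (b := R - a) hp).comp_sub_left R)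
  simp only [sub_zero, sub_sub_cancel] at h
  exact h.symm.mul_continuousOn (by rwa [uIcc_of_le haR])

theorem rpow_sub_one_mul_two_mul_le {t ε u v : ℝ} (ht : 0 < t) (hε : 0 < ε) :
    t ^ (k - 1) * (2 * u * v) ≤ ε * (t ^ (k - 2) * u ^ 2) + ε⁻¹ * (t ^ k * v ^ 2) := by
  have hlower : t ^ (k - 2) = t ^ (k - 1) / t := by
    rw [← rpow_sub_one ht.ne']; ring_nf
  have hupper : t ^ k = t ^ (k - 1) * t := by
    rw [← rpow_add_one ht.ne']; ring_nf
  have hsq : ε * (t ^ (k - 1) / t * u ^ 2) + ε⁻¹ * (t ^ (k - 1) * t * v ^ 2)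
      - t ^ (k - 1) * (2 * u * v) = t ^ (k - 1) / (ε * t) * (ε * u - t * v) ^ 2 := by
    field_simp; ring
  rw [hlower, hupper, ← sub_nonneg, hsq]
  positivity

theorem integral_rpow_sub_two_mul_sq_eq (haR : a ≤ R) (hk : 1 < k)
    (hFc : ContinuousOn F (Icc a R)) (hF : ∀ x ∈ Ioo a R, HasDerivAt F (F' x) x)
    (hF' : ContinuousOn F' (Icc a R)) :
    (k - 1) * ∫ y in a..R, (R - y) ^ (k - 2) * F y ^ 2 =
      (R - a) ^ (k - 1) * F a ^ 2 + ∫ y in a..R, (R - y) ^ (k - 1) * (2 * F y * F' y) := by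
  have hI := intervalIntegrable_rpow_sub_mul (p := k - 2) (g := fun y => F y ^ 2)
    (by linarith) haR (hFc.pow 2)
  have hS := intervalIntegrable_rpow_sub_mul (p := k - 1) (g := fun y => 2 * F y * F' y)
    (by linarith) haR ((continuousOn_const.mul hFc).mul hF')
  have hcont : ContinuousOn (fun y => (R - y) ^ (k - 1) * F y ^ 2) (Icc a R) :=
    ((continuousOn_const.sub continuousOn_id).rpow_const
      (fun _ _ => Or.inr (by linarith))).mul (hFc.pow 2)
  have hderiv : ∀ x ∈ Ioo a R, HasDerivAt (fun y => (R - y) ^ (k - 1) * F y ^ 2)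
      (-((k - 1) * ((R - x) ^ (k - 2) * F x ^ 2)) + (R - x) ^ (k - 1) * (2 * F x * F' x)) x := by
    intro x hx
    have hw : HasDerivAt (fun y => (R - y) ^ (k - 1)) (-((k - 1) * (R - x) ^ (k - 2))) x := by
      convert ((hasDerivAt_id' x).const_sub R).rpow_const (p := k - 1)
        (Or.inl (sub_pos.2 hx.2).ne') using 1
      rw [show k - 1 - 1 = k - 2 by ring]; ring
    exact (hw.fun_mul ((hF x hx).fun_sq)).congr_deriv (by ring)
  have hI' : IntervalIntegrable (fun y => -((k - 1) * ((R - y) ^ (k - 2) * F y ^ 2))) volume a R :=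
    (hI.const_mul (k - 1)).neg
  have hFTC := intervalIntegral.integral_eq_sub_of_hasDerivAt_of_le haR hcont hderiv (hI'.add hS)
  rw [intervalIntegral.integral_add hI' hS, intervalIntegral.integral_neg,
    intervalIntegral.integral_const_mul, sub_self, zero_rpow (by linarith)] at hFTC
  linarith

theorem integral_rpow_sub_two_mul_sq_le (haR : a ≤ R) (hk : 1 < k)
    (hFc : ContinuousOn F (Icc a R)) (hF : ∀ x ∈ Ioo a R, HasDerivAt F (F' x) x)
    (hF' : ContinuousOn F' (Icc a R)) :
    (k - 1) / 2 * ∫ y in a..R, (R - y) ^ (k - 2) * F y ^ 2 ≤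
      (R - a) ^ (k - 1) * F a ^ 2 + 2 / (k - 1) * ∫ y in a..R, (R - y) ^ k * F' y ^ 2 := by
  have hε : 0 < (k - 1) / 2 := by linarith
  have hI := intervalIntegrable_rpow_sub_mul (p := k - 2) (g := fun y => F y ^ 2)
    (by linarith) haR (hFc.pow 2)
  have hS := intervalIntegrable_rpow_sub_mul (p := k - 1) (g := fun y => 2 * F y * F' y)
    (by linarith) haR ((continuousOn_const.mul hFc).mul hF')
  have hT := intervalIntegrable_rpow_sub_mul (p := k) (g := fun y => F' y ^ 2)
    (by linarith) haR (hF'.pow 2)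
  have hAMGM : ∫ y in a..R, (R - y) ^ (k - 1) * (2 * F y * F' y) ≤
      (k - 1) / 2 * (∫ y in a..R, (R - y) ^ (k - 2) * F y ^ 2) +
        ((k - 1) / 2)⁻¹ * ∫ y in a..R, (R - y) ^ k * F' y ^ 2 := by
    rw [← intervalIntegral.integral_const_mul, ← intervalIntegral.integral_const_mul,
      ← intervalIntegral.integral_add (hI.const_mul _) (hT.const_mul _)]
    exact intervalIntegral.integral_mono_on_of_le_Ioo haR hS
      ((hI.const_mul _).add (hT.const_mul _))
      fun y hy => rpow_sub_one_mul_two_mul_le (sub_pos.2 hy.2) hε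
  rw [inv_div] at hAMGM
  linarith [integral_rpow_sub_two_mul_sq_eq haR hk hFc hF hF']

theorem sq_mul_sub_le_integral_sq_add_sq (hab : a ≤ b)
    (hFc : ContinuousOn F (Icc a b)) (hF : ∀ x ∈ Ioo a b, HasDerivAt F (F' x) x)
    (hF' : ContinuousOn F' (Icc a b)) :
    F a ^ 2 * (b - a) ≤ (1 + (b - a)) * ∫ y in a..b, (F y ^ 2 + F' y ^ 2) := by
  have hint : ∀ c ∈ Icc a b, IntervalIntegrable (fun y => F y ^ 2 + F' y ^ 2) volume a c :=
    fun c hc => ((hFc.pow 2).add (hF'.pow 2)).mono (Icc_subset_Icc le_rfl hc.2)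
      |>.intervalIntegrable_of_Icc hc.1
  set K := ∫ y in a..b, (F y ^ 2 + F' y ^ 2)
  have hpoint : ∀ y ∈ Icc a b, F a ^ 2 ≤ F y ^ 2 + K := by
    intro y hy
    have hsub : Icc a y ⊆ Icc a b := Icc_subset_Icc le_rfl hy.2
    have hFTC : ∫ t in a..y, 2 * F t * F' t = F y ^ 2 - F a ^ 2 :=
      intervalIntegral.integral_eq_sub_of_hasDerivAt_of_le hy.1 ((hFc.mono hsub).pow 2)
        (fun x hx => (hF x ⟨hx.1, hx.2.trans_le hy.2⟩).fun_sq)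
        (((continuousOn_const.mul hFc).mul hF').mono hsub |>.intervalIntegrable_of_Icc hy.1)
    have hle : -∫ t in a..y, 2 * F t * F' t ≤ ∫ t in a..y, (F t ^ 2 + F' t ^ 2) := by
      rw [← intervalIntegral.integral_neg]
      refine intervalIntegral.integral_mono_on hy.1 ?_ (hint y hy) fun t _ => ?_
      · exact (((continuousOn_const.mul hFc).mul hF').mono hsub).neg.intervalIntegrable_of_Icc hy.1
      · nlinarith [sq_nonneg (F t + F' t)]
    have hK : ∫ t in a..y, (F t ^ 2 + F' t ^ 2) ≤ K :=
      intervalIntegral.integral_mono_interval le_rfl hy.1 hy.2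
        (Filter.Eventually.of_forall fun t => by positivity) (hint b (right_mem_Icc.2 hab))
    linarith
  have hF2 : IntervalIntegrable (fun y => F y ^ 2) volume a b :=
    (hFc.pow 2).intervalIntegrable_of_Icc hab
  have hmono := intervalIntegral.integral_mono_on hab intervalIntegrable_const
    (hF2.add intervalIntegrable_const) hpoint
  have hF2K : ∫ y in a..b, F y ^ 2 ≤ K :=
    intervalIntegral.integral_mono_on hab hF2 (hint b (right_mem_Icc.2 hab))
      fun y _ => le_add_of_nonneg_right (sq_nonneg _)
  rw [intervalIntegral.integral_add hF2 intervalIntegrable_const, intervalIntegral.integral_const,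
    intervalIntegral.integral_const, smul_eq_mul, smul_eq_mul] at hmono
  linarith

theorem sq_le_integral_rpow_mul (hab : a < b) (hbR : b < R) (hk : 0 ≤ k)
    (hFc : ContinuousOn F (Icc a R)) (hF : ∀ x ∈ Ioo a R, HasDerivAt F (F' x) x)
    (hF' : ContinuousOn F' (Icc a R)) :
    F a ^ 2 ≤ (1 + (b - a)) / ((b - a) * (R - b) ^ k) *
      ∫ y in a..R, (R - y) ^ k * (F y ^ 2 + F' y ^ 2) := by
  have hsub : Icc a b ⊆ Icc a R := Icc_subset_Icc le_rfl hbR.le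
  have hg : ContinuousOn (fun y => F y ^ 2 + F' y ^ 2) (Icc a R) := (hFc.pow 2).add (hF'.pow 2)
  have hwg := intervalIntegrable_rpow_sub_mul (p := k) (by linarith) (hab.trans hbR).le hg
  have htrace := sq_mul_sub_le_integral_sq_add_sq hab.le (hFc.mono hsub)
    (fun x hx => hF x ⟨hx.1, hx.2.trans hbR⟩) (hF'.mono hsub)
  have hweight : (R - b) ^ k * ∫ y in a..b, (F y ^ 2 + F' y ^ 2) ≤
      ∫ y in a..R, (R - y) ^ k * (F y ^ 2 + F' y ^ 2) := calc
    _ = ∫ y in a..b, (R - b) ^ k * (F y ^ 2 + F' y ^ 2) :=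
      (intervalIntegral.integral_const_mul _ _).symm
    _ ≤ ∫ y in a..b, (R - y) ^ k * (F y ^ 2 + F' y ^ 2) := by
      refine intervalIntegral.integral_mono_on hab.le
        (((hg.mono hsub).intervalIntegrable_of_Icc hab.le).const_mul _)
        (((continuousOn_const.sub continuousOn_id).rpow_const (fun _ _ => Or.inr hk)).mul
          (hg.mono hsub) |>.intervalIntegrable_of_Icc hab.le) fun y hy => ?_
      gcongr
      exact hy.2
    _ ≤ ∫ y in a..R, (R - y) ^ k * (F y ^ 2 + F' y ^ 2) :=
      intervalIntegral.integral_mono_interval le_rfl hab.le hbR.le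
        ((ae_restrict_iff' measurableSet_Ioc).2 <| Filter.Eventually.of_forall
          fun y hy => mul_nonneg (rpow_nonneg (sub_nonneg.2 hy.2) _) (by positivity)) hwg
  have hw : 0 < (R - b) ^ k := rpow_pos_of_pos (sub_pos.2 hbR) k
  rw [div_mul_eq_mul_div, le_div_iff₀ (by positivity)]
  linarith [mul_le_mul_of_nonneg_right htrace hw.le,
    mul_le_mul_of_nonneg_left hweight (by linarith : 0 ≤ 1 + (b - a))]

/-- Hardy-type inequality near the degenerate endpoint R: for k > 1 there is a constant C,
depending only on a, R, k, such that for every C¹ function F on [a, R],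
∫_a^R (R−y)^{k−2} F² ≤ C ∫_a^R (R−y)^{k} (F² + F′²). -/
theorem stmt_5 (a R k : ℝ) (haR : a < R) (hk : 1 < k) :
    ∃ C : ℝ, 0 < C ∧
      ∀ F F' : ℝ → ℝ,
        (∀ y ∈ Icc a R, HasDerivWithinAt F (F' y) (Icc a R) y) →
        ContinuousOn F' (Icc a R) →
        (∫ y in a..R, (R - y) ^ (k - 2) * F y ^ 2) ≤
          C * ∫ y in a..R, (R - y) ^ k * (F y ^ 2 + F' y ^ 2) := by
  obtain ⟨b, hab, hbR⟩ := exists_between haR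
  set D := (1 + (b - a)) / ((b - a) * (R - b) ^ k)
  have hk' : 0 < k - 1 := by linarith
  refine ⟨2 / (k - 1) * ((R - a) ^ (k - 1) * D + 2 / (k - 1)), by positivity, ?_⟩
  intro F F' hF hF'
  have hFc : ContinuousOn F (Icc a R) := fun y hy => (hF y hy).continuousWithinAt
  have hFd : ∀ x ∈ Ioo a R, HasDerivAt F (F' x) x := fun x hx =>
    (hF x (Ioo_subset_Icc_self hx)).hasDerivAt (Icc_mem_nhds hx.1 hx.2)
  set J := ∫ y in a..R, (R - y) ^ k * (F y ^ 2 + F' y ^ 2)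
  have hHardy := integral_rpow_sub_two_mul_sq_le haR.le hk hFc hFd hF'
  have htrace : F a ^ 2 ≤ D * J := sq_le_integral_rpow_mul hab hbR (by linarith) hFc hFd hF'
  have hF'J : ∫ y in a..R, (R - y) ^ k * F' y ^ 2 ≤ J :=
    intervalIntegral.integral_mono_on haR.le
      (intervalIntegrable_rpow_sub_mul (by linarith) haR.le (hF'.pow 2))
      (intervalIntegrable_rpow_sub_mul (by linarith) haR.le ((hFc.pow 2).add (hF'.pow 2)))
      fun y hy => mul_le_mul_of_nonneg_left (le_add_of_nonneg_left (sq_nonneg _))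
        (rpow_nonneg (sub_nonneg.2 hy.2) _)
  have hRa : 0 ≤ (R - a) ^ (k - 1) := rpow_nonneg (sub_nonneg.2 haR.le) _
  calc ∫ y in a..R, (R - y) ^ (k - 2) * F y ^ 2
      = 2 / (k - 1) * ((k - 1) / 2 * ∫ y in a..R, (R - y) ^ (k - 2) * F y ^ 2) := by
        field_simp
    _ ≤ 2 / (k - 1) * ((R - a) ^ (k - 1) * (D * J) + 2 / (k - 1) * J) := by
        gcongr
        exact hHardy.trans (add_le_add (mul_le_mul_of_nonneg_left htrace hRa)
          (mul_le_mul_of_nonneg_left hF'J (by positivity)))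
    _ = 2 / (k - 1) * ((R - a) ^ (k - 1) * D + 2 / (k - 1)) * J := by ring
end

section
/- Quadratic coercivity of the nonlinear energy density E₀: suppose γ > 4/3 and define, for real a, b with 1+a > 0 and 1+a+b > 0, E₀(a,b) = (1/(γ−1))[(1+a)^{2−2γ}(1+a+b)^{1−γ} − 3(γ−1)(1+a)^{−1} + (γ−1)(1+a)^{−2} b + (3γ−4)]. Then there exist ε ∈ (0, 1/2) and C ≥ 1, depending only on γ, such that for all a, b with |a| ≤ ε and |b| ≤ ε: C^{−1}(a² + b²) ≤ E₀(a,b) ≤ C(a² + b²). -/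
/-!
Write `u = 1 + a`, `v = 1 + a + b` and `q = 4(γ - 1)/γ`, and let `G_p(x) = x^p - 1 - p(x - 1)` be
the gap between `x^p` and its tangent at `1`. At fixed `u`, `v ↦ (γ - 1)E₀` is convex with its
minimum at `v = u^(2-q)`, which splits `(γ - 1)E₀` into the remainder `u^(-q) G_{1-γ}(v / u^(2-q))`
plus the minimum value `γ G_{-q}(u) - 4(γ - 1) G_{-1}(u)`. Both are one-variable functions vanishing
to second order at `1` with positive second derivative (for the second one this is `q > 1`, i.e.
`γ > 4/3`), hence comparable to squares; and as `v / u^(2-q) - 1 = b + O(a)`, the two squares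
together are comparable to `a² + b²`.
-/

open Real Set Filter Topology

def Comparable {α : Type*} (l : Filter α) (f g : α → ℝ) : Prop :=
  ∃ c > 0, ∃ C > 0, ∀ᶠ x in l, c * g x ≤ f x ∧ f x ≤ C * g x

namespace Comparable

variable {α β : Type*} {l : Filter α} {f f₁ f₂ g g₁ g₂ k : α → ℝ}

lemma comp_tendsto {l' : Filter β} {f g : β → ℝ} (hfg : Comparable l' f g) {u : α → β}
    (hu : Tendsto u l l') : Comparable l (f ∘ u) (g ∘ u) := by
  obtain ⟨c, hc, C, hC, h⟩ := hfg
  exact ⟨c, hc, C, hC, hu.eventually h⟩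

lemma congr (hfg : Comparable l f g) (hf : f =ᶠ[l] f₁) (hg : g =ᶠ[l] g₁) :
    Comparable l f₁ g₁ := by
  obtain ⟨c, hc, C, hC, h⟩ := hfg
  refine ⟨c, hc, C, hC, ?_⟩
  filter_upwards [h, hf, hg] with x hx hfx hgx
  rwa [← hfx, ← hgx]

lemma trans (h₁ : Comparable l f g) (h₂ : Comparable l g k) : Comparable l f k := by
  obtain ⟨c₁, hc₁, C₁, hC₁, h₁⟩ := h₁
  obtain ⟨c₂, hc₂, C₂, hC₂, h₂⟩ := h₂
  refine ⟨c₁ * c₂, by positivity, C₁ * C₂, by positivity, ?_⟩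
  filter_upwards [h₁, h₂] with x ⟨hlo₁, hhi₁⟩ ⟨hlo₂, hhi₂⟩
  constructor <;> nlinarith

lemma add (h₁ : Comparable l f₁ g₁) (h₂ : Comparable l f₂ g₂) (hg₁ : 0 ≤ᶠ[l] g₁)
    (hg₂ : 0 ≤ᶠ[l] g₂) : Comparable l (f₁ + f₂) (g₁ + g₂) := by
  obtain ⟨c₁, hc₁, C₁, hC₁, h₁⟩ := h₁
  obtain ⟨c₂, hc₂, C₂, hC₂, h₂⟩ := h₂
  refine ⟨min c₁ c₂, lt_min hc₁ hc₂, max C₁ C₂, lt_max_of_lt_left hC₁, ?_⟩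
  filter_upwards [h₁, h₂, hg₁, hg₂] with x ⟨hlo₁, hhi₁⟩ ⟨hlo₂, hhi₂⟩ hx₁ hx₂
  simp only [Pi.add_apply, Pi.zero_apply] at hx₁ hx₂ ⊢
  constructor <;> nlinarith [min_le_left c₁ c₂, min_le_right c₁ c₂, le_max_left C₁ C₂,
    le_max_right C₁ C₂]

lemma mul_left_of_tendsto (hfg : Comparable l f g) (hg : 0 ≤ᶠ[l] g) {h : α → ℝ} {a : ℝ}
    (hh : Tendsto h l (𝓝 a)) (ha : 0 < a) : Comparable l (h * f) g := by
  obtain ⟨c, hc, C, hC, hfg⟩ := hfg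
  refine ⟨a / 2 * c, by positivity, 2 * a * C, by positivity, ?_⟩
  filter_upwards [hfg, hg, hh.eventually_const_le (half_lt_self ha),
    hh.eventually_le_const (lt_two_mul_self ha)] with x ⟨hlo, hhi⟩ hgx hlo' hhi'
  simp only [Pi.mul_apply, Pi.zero_apply] at hgx ⊢
  have hf : 0 ≤ f x := (mul_nonneg hc.le hgx).trans hlo
  constructor
  · calc a / 2 * c * g x = a / 2 * (c * g x) := by ring
      _ ≤ h x * f x := mul_le_mul hlo' hlo (by positivity) (by linarith)
  · calc h x * f x ≤ 2 * a * (C * g x) := mul_le_mul hhi' hhi hf (by positivity)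
      _ = 2 * a * C * g x := by ring

lemma exists_one_le (hfg : Comparable l f g) (hg : 0 ≤ᶠ[l] g) :
    ∃ C : ℝ, 1 ≤ C ∧ ∀ᶠ x in l, C⁻¹ * g x ≤ f x ∧ f x ≤ C * g x := by
  obtain ⟨c, hc, C, hC, h⟩ := hfg
  refine ⟨max (max c⁻¹ C) 1, le_max_right _ _, ?_⟩
  filter_upwards [h, hg] with x ⟨hlo, hhi⟩ hgx
  have hc' : (max (max c⁻¹ C) 1)⁻¹ ≤ c :=
    inv_le_of_inv_le₀ hc ((le_max_left _ _).trans (le_max_left _ _))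
  exact ⟨(mul_le_mul_of_nonneg_right hc' hgx).trans hlo,
    hhi.trans (mul_le_mul_of_nonneg_right ((le_max_right _ _).trans (le_max_left _ _)) hgx)⟩

end Comparable

lemma isMinOn_of_hasDerivAt_eq_zero_of_deriv2_nonneg {S : Set ℝ} (hSo : IsOpen S)
    (hSc : Convex ℝ S) {k k' k'' : ℝ → ℝ} {x₀ : ℝ} (hx₀ : x₀ ∈ S)
    (hk : ∀ x ∈ S, HasDerivAt k (k' x) x) (hk' : ∀ x ∈ S, HasDerivAt k' (k'' x) x)
    (hk'' : ∀ x ∈ S, 0 ≤ k'' x) (h₀ : k' x₀ = 0) : IsMinOn k S x₀ := by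
  have hconv : ConvexOn ℝ S k := by
    refine convexOn_of_hasDerivWithinAt2_nonneg (f' := k') (f'' := k'') hSc
      (fun x hx => (hk x hx).continuousAt.continuousWithinAt) ?_ ?_ ?_ <;>
    rw [hSo.interior_eq]
    exacts [fun x hx => (hk x hx).hasDerivWithinAt, fun x hx => (hk' x hx).hasDerivWithinAt, hk'']
  refine hconv.isMinOn_of_rightDeriv_eq_zero (hSo.interior_eq.symm ▸ hx₀) ?_
  rw [(hk x₀ hx₀).hasDerivWithinAt.derivWithin (uniqueDiffWithinAt_Ioi x₀), h₀]

lemma eventually_half_mul_sq_le {f f' f'' : ℝ → ℝ} {x₀ m : ℝ}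
    (hf : ∀ᶠ x in 𝓝 x₀, HasDerivAt f (f' x) x) (hf' : ∀ᶠ x in 𝓝 x₀, HasDerivAt f' (f'' x) x)
    (hm : ∀ᶠ x in 𝓝 x₀, m ≤ f'' x) (h₀ : f x₀ = 0) (h₀' : f' x₀ = 0) :
    ∀ᶠ x in 𝓝 x₀, m / 2 * (x - x₀) ^ 2 ≤ f x := by
  obtain ⟨δ, hδ, hball⟩ := Metric.eventually_nhds_iff_ball.1 (hf.and (hf'.and hm))
  have hsq (x : ℝ) : HasDerivAt (fun x => m / 2 * (x - x₀) ^ 2) (m * (x - x₀)) x :=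
    ((((hasDerivAt_id' x).sub_const x₀).pow 2).const_mul (m / 2)).congr_deriv
      (by simp only [Nat.cast_ofNat, Nat.add_one_sub_one, pow_one, mul_one]; ring)
  have hlin (x : ℝ) : HasDerivAt (fun x => m * (x - x₀)) m x :=
    (((hasDerivAt_id' x).sub_const x₀).const_mul m).congr_deriv (mul_one m)
  have hmin := isMinOn_of_hasDerivAt_eq_zero_of_deriv2_nonneg Metric.isOpen_ball
    (convex_ball x₀ δ) (Metric.mem_ball_self hδ) (fun x hx => (hball x hx).1.sub (hsq x))
    (fun x hx => (hball x hx).2.1.sub (hlin x)) (fun x hx => sub_nonneg.2 (hball x hx).2.2)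
    (by simp [h₀'])
  filter_upwards [Metric.ball_mem_nhds x₀ hδ] with x hx
  simpa [h₀] using hmin hx

lemma comparable_sq_of_hasDerivAt {f f' f'' : ℝ → ℝ} {x₀ : ℝ}
    (hf : ∀ᶠ x in 𝓝 x₀, HasDerivAt f (f' x) x) (hf' : ∀ᶠ x in 𝓝 x₀, HasDerivAt f' (f'' x) x)
    (hf'' : ContinuousAt f'' x₀) (h₀ : f x₀ = 0) (h₀' : f' x₀ = 0) (hpos : 0 < f'' x₀) :
    Comparable (𝓝 x₀) f fun x => (x - x₀) ^ 2 := by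
  have hlo := eventually_half_mul_sq_le hf hf' (hf''.eventually_const_le (half_lt_self hpos))
    h₀ h₀'
  have hhi := eventually_half_mul_sq_le (f := -f) (f' := -f') (f'' := -f'')
    (m := -(2 * f'' x₀)) (hf.mono fun x hx => hx.neg) (hf'.mono fun x hx => hx.neg)
    (hf''.eventually_le_const (lt_two_mul_self hpos) |>.mono fun x hx => by simpa using hx)
    (by simp [h₀]) (by simp [h₀'])
  refine ⟨f'' x₀ / 2 / 2, by positivity, 2 * f'' x₀ / 2, by positivity, ?_⟩
  filter_upwards [hlo, hhi] with x hlo hhi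
  simp only [Pi.neg_apply] at hhi
  constructor <;> linarith

noncomputable def powTangentGap (p x : ℝ) : ℝ := x ^ p - 1 - p * (x - 1)

lemma hasDerivAt_powTangentGap (p : ℝ) {x : ℝ} (hx : x ≠ 0) :
    HasDerivAt (powTangentGap p) (p * x ^ (p - 1) - p) x := by
  have := ((hasDerivAt_rpow_const (p := p) (Or.inl hx)).sub_const 1).sub
    (((hasDerivAt_id' x).sub_const 1).const_mul p)
  exact this.congr_deriv (by ring)

lemma hasDerivAt_powTangentGap_deriv (p : ℝ) {x : ℝ} (hx : x ≠ 0) :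
    HasDerivAt (fun x => p * x ^ (p - 1) - p) (p * (p - 1) * x ^ (p - 2)) x := by
  have := ((hasDerivAt_rpow_const (p := p - 1) (Or.inl hx)).const_mul p).sub_const p
  exact this.congr_deriv (by ring_nf)

lemma comparable_sub_powTangentGap {α β p r : ℝ}
    (h : 0 < α * (p * (p - 1)) - β * (r * (r - 1))) :
    Comparable (𝓝 1) (fun x => α * powTangentGap p x - β * powTangentGap r x)
      fun x => (x - 1) ^ 2 := by
  have hne : ∀ᶠ x in 𝓝 (1 : ℝ), x ≠ 0 := eventually_ne_nhds one_ne_zero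
  refine comparable_sq_of_hasDerivAt
    (f' := fun x => α * (p * x ^ (p - 1) - p) - β * (r * x ^ (r - 1) - r))
    (f'' := fun x => α * (p * (p - 1) * x ^ (p - 2)) - β * (r * (r - 1) * x ^ (r - 2)))
    (hne.mono fun x hx => ((hasDerivAt_powTangentGap p hx).const_mul α).sub
      ((hasDerivAt_powTangentGap r hx).const_mul β))
    (hne.mono fun x hx => ((hasDerivAt_powTangentGap_deriv p hx).const_mul α).sub
      ((hasDerivAt_powTangentGap_deriv r hx).const_mul β))
    ?_ (by simp [powTangentGap]) (by simp) (by simpa using h)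
  fun_prop (disch := norm_num)

lemma sq_add_sq_le_of_abs_mul_sub_le {a b s w L : ℝ} (hw₁ : 1 / 2 ≤ w) (hw₂ : w ≤ 2)
    (h : |w * s - b| ≤ L * |a|) :
    a ^ 2 + b ^ 2 ≤ 8 * (1 + L ^ 2) * (s ^ 2 + a ^ 2) ∧
      s ^ 2 + a ^ 2 ≤ 8 * (1 + L ^ 2) * (a ^ 2 + b ^ 2) := by
  have he : (w * s - b) ^ 2 ≤ L ^ 2 * a ^ 2 := by
    simpa only [sq_abs, mul_pow] using pow_le_pow_left₀ (abs_nonneg _) h 2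
  have hws : (w * s) ^ 2 ≤ 4 * s ^ 2 ∧ s ^ 2 ≤ 4 * (w * s) ^ 2 := by
    rw [mul_pow]
    constructor
    · exact mul_le_mul_of_nonneg_right (by nlinarith) (sq_nonneg s)
    · nlinarith [mul_le_mul_of_nonneg_right (by nlinarith : 1 / 4 ≤ w ^ 2) (sq_nonneg s)]
  constructor
  · nlinarith [sq_nonneg (w * s + (w * s - b)), mul_nonneg (sq_nonneg L) (sq_nonneg s)]
  · nlinarith [sq_nonneg (b - (w * s - b)), mul_nonneg (sq_nonneg L) (sq_nonneg b)]

lemma tendsto_one_add_fst : Tendsto (fun p : ℝ × ℝ => 1 + p.1) (𝓝 0) (𝓝 1) :=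
  (continuous_const.add continuous_fst).tendsto' 0 1 (by simp)

lemma tendsto_one_add_fst_rpow (r : ℝ) :
    Tendsto (fun p : ℝ × ℝ => (1 + p.1) ^ r) (𝓝 0) (𝓝 1) := by
  simpa using tendsto_one_add_fst.rpow_const (p := r) (Or.inl one_ne_zero)

lemma exists_eventually_abs_rpow_sub_self_le (r : ℝ) :
    ∃ L : ℝ, ∀ᶠ x in 𝓝 (1 : ℝ), |x ^ r - x| ≤ L * |x - 1| := by
  have hd := (hasDerivAt_rpow_const (p := r) (Or.inl one_ne_zero)).sub (hasDerivAt_id' 1)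
  simpa only [Pi.sub_apply, one_rpow, sub_self, sub_zero, norm_eq_abs] using
    hd.isBigO_sub.bound

lemma comparable_sq_add_sq (r : ℝ) :
    Comparable (𝓝 (0 : ℝ × ℝ)) (fun p => ((1 + p.1 + p.2) / (1 + p.1) ^ r - 1) ^ 2 + p.1 ^ 2)
      fun p => p.1 ^ 2 + p.2 ^ 2 := by
  have hw := tendsto_one_add_fst_rpow r
  obtain ⟨L, hL⟩ := exists_eventually_abs_rpow_sub_self_le r
  refine ⟨(8 * (1 + L ^ 2))⁻¹, by positivity, 8 * (1 + L ^ 2), by positivity, ?_⟩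
  filter_upwards [tendsto_one_add_fst.eventually hL,
    hw.eventually_const_le (by norm_num : (1 : ℝ) / 2 < 1),
    hw.eventually_le_const (by norm_num : (1 : ℝ) < 2)] with p hLp hw₁ hw₂
  have hw₀ : (1 + p.1) ^ r ≠ 0 := by positivity
  obtain ⟨hlo, hhi⟩ := sq_add_sq_le_of_abs_mul_sub_le hw₁ hw₂
    (s := (1 + p.1 + p.2) / (1 + p.1) ^ r - 1) (b := p.2) (a := p.1) (L := L) (by
      rw [show (1 + p.1) ^ r * ((1 + p.1 + p.2) / (1 + p.1) ^ r - 1) - p.2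
          = -((1 + p.1) ^ r - (1 + p.1)) by field_simp; ring, abs_neg]
      simpa using hLp)
  exact ⟨(inv_mul_le_iff₀ (by positivity)).2 hlo, hhi⟩

lemma tendsto_one_add_fst_add_snd :
    Tendsto (fun x : ℝ × ℝ => 1 + x.1 + x.2) (𝓝 0) (𝓝 1) :=
  ((continuous_const.add continuous_fst).add continuous_snd).tendsto' 0 1 (by simp)

lemma comparable_mul_powTangentGap {p : ℝ} (hp : 0 < p * (p - 1)) (s r : ℝ) :
    Comparable (𝓝 (0 : ℝ × ℝ))
      (fun x => (1 + x.1) ^ s * powTangentGap p ((1 + x.1 + x.2) / (1 + x.1) ^ r))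
      fun x => ((1 + x.1 + x.2) / (1 + x.1) ^ r - 1) ^ 2 := by
  have hG : Comparable (𝓝 1) (powTangentGap p) fun x => (x - 1) ^ 2 :=
    (comparable_sub_powTangentGap (α := 1) (β := 0) (r := 0) (by simpa using hp)).congr
      (Eventually.of_forall fun x => by simp) EventuallyEq.rfl
  have ht : Tendsto (fun x : ℝ × ℝ => (1 + x.1 + x.2) / (1 + x.1) ^ r) (𝓝 0) (𝓝 1) := by
    have h := tendsto_one_add_fst_add_snd.div (tendsto_one_add_fst_rpow r) one_ne_zero
    rwa [div_one] at h
  exact (hG.comp_tendsto ht).mul_left_of_tendsto (Eventually.of_forall fun x => sq_nonneg _)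
    (tendsto_one_add_fst_rpow s) one_pos

lemma energy_decomposition {γ q u b : ℝ} (hq : γ * q = 4 * (γ - 1)) (hu : 0 < u)
    (hv : 0 < u + b) :
    u ^ (2 - 2 * γ) * (u + b) ^ (1 - γ) - 3 * (γ - 1) * u ^ (-1 : ℝ)
        + (γ - 1) * u ^ (-2 : ℝ) * b + (3 * γ - 4)
      = u ^ (-q) * powTangentGap (1 - γ) ((u + b) / u ^ (2 - q))
        + (γ * powTangentGap (-q) u - 4 * (γ - 1) * powTangentGap (-1) u) := by
  have h₁ : u ^ (-q) * ((u + b) / u ^ (2 - q)) ^ (1 - γ)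
      = u ^ (2 - 2 * γ) * (u + b) ^ (1 - γ) := by
    rw [div_rpow hv.le (rpow_nonneg hu.le _), ← rpow_mul hu.le, mul_div_assoc', mul_comm,
      mul_div_assoc, ← rpow_sub hu, mul_comm]
    congr 2
    linear_combination -hq
  have h₂ : u ^ (-q) / u ^ (2 - q) = u ^ (-2 : ℝ) := by
    rw [← rpow_sub hu]; ring_nf
  have h₃ : u ^ (-2 : ℝ) * u = u ^ (-1 : ℝ) := by
    rw [← rpow_add_one hu.ne']; norm_num
  simp only [powTangentGap]
  linear_combination -h₁ - (γ - 1) * (u + b) * h₂ - (γ - 1) * h₃ - (u - 1) * hq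

lemma exists_forall_abs_le_of_eventually_nhds_zero {P : ℝ × ℝ → Prop}
    (h : ∀ᶠ p in 𝓝 0, P p) {δ : ℝ} (hδ : 0 < δ) :
    ∃ ε ∈ Ioo 0 δ, ∀ a b : ℝ, |a| ≤ ε → |b| ≤ ε → P (a, b) := by
  obtain ⟨η, hη, hP⟩ := Metric.eventually_nhds_iff.1 h
  refine ⟨min (η / 2) (δ / 2), ⟨by positivity, by linarith [min_le_right (η / 2) (δ / 2)]⟩,
    fun a b ha hb => hP ?_⟩
  have := min_le_left (η / 2) (δ / 2)
  simp only [Prod.dist_eq, Prod.fst_zero, Prod.snd_zero, Real.dist_eq, sub_zero]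
  exact max_lt (by linarith) (by linarith)

/-- Quadratic coercivity of the nonlinear energy density E₀: for γ > 4/3 there are
ε ∈ (0, 1/2) and C ≥ 1 (depending only on γ) such that C⁻¹(a²+b²) ≤ E₀(a,b) ≤ C(a²+b²)
whenever |a| ≤ ε and |b| ≤ ε. -/
theorem stmt_7 (γ : ℝ) (hγ : 4 / 3 < γ) :
    let E₀ : ℝ → ℝ → ℝ := fun a b =>
      (1 / (γ - 1)) * ((1 + a) ^ (2 - 2 * γ) * (1 + a + b) ^ (1 - γ)
        - 3 * (γ - 1) * (1 + a) ^ (-1 : ℝ) + (γ - 1) * (1 + a) ^ (-2 : ℝ) * b + (3 * γ - 4))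
    ∃ ε ∈ Ioo (0 : ℝ) (1 / 2), ∃ C : ℝ, 1 ≤ C ∧
      ∀ a b : ℝ, |a| ≤ ε → |b| ≤ ε →
        C⁻¹ * (a ^ 2 + b ^ 2) ≤ E₀ a b ∧ E₀ a b ≤ C * (a ^ 2 + b ^ 2) := by
  intro E₀
  have hγ₁ : 0 < γ - 1 := by linarith
  obtain ⟨q, hq⟩ : ∃ q, γ * q = 4 * (γ - 1) := ⟨4 * (γ - 1) / γ, by field_simp⟩
  have hq₁ : 0 < q - 1 := by nlinarith
  have hP := comparable_mul_powTangentGap (p := 1 - γ) (by nlinarith) (-q) (2 - q)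
  have hM : Comparable (𝓝 (0 : ℝ × ℝ))
      (fun x => γ * powTangentGap (-q) (1 + x.1) - 4 * (γ - 1) * powTangentGap (-1) (1 + x.1))
      fun x => x.1 ^ 2 :=
    ((comparable_sub_powTangentGap (by nlinarith [mul_pos hγ₁ hq₁])).comp_tendsto
      tendsto_one_add_fst).congr EventuallyEq.rfl (Eventually.of_forall fun x => by simp)
  have hPM := (hP.add hM (Eventually.of_forall fun x => sq_nonneg _)
    (Eventually.of_forall fun x => sq_nonneg _)).trans (comparable_sq_add_sq (2 - q))
  have hE : Comparable (𝓝 (0 : ℝ × ℝ)) (fun x => E₀ x.1 x.2) fun x => x.1 ^ 2 + x.2 ^ 2 := by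
    refine (hPM.mul_left_of_tendsto (Eventually.of_forall fun x => by positivity)
      (tendsto_const_nhds (x := 1 / (γ - 1))) (by positivity)).congr ?_ EventuallyEq.rfl
    filter_upwards [tendsto_one_add_fst.eventually (lt_mem_nhds one_pos),
      tendsto_one_add_fst_add_snd.eventually (lt_mem_nhds one_pos)] with x hu hv
    simp only [E₀, Pi.mul_apply, Pi.add_apply, energy_decomposition hq hu hv]
  obtain ⟨C, hC, hbound⟩ := hE.exists_one_le (Eventually.of_forall fun x => by positivity)
  obtain ⟨ε, hε, hbox⟩ := exists_forall_abs_le_of_eventually_nhds_zero hbound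
    (by norm_num : (0 : ℝ) < 1 / 2)
  exact ⟨ε, hε, C, hC, hbox⟩
end

section
/- Pointwise energy identity for the basic estimate: let U ⊆ ℝ² be open, let ζ : U → ℝ be twice continuously differentiable, and let (y,t) ∈ U with y ≠ 0, 1 + ζ(y,t) > 0 and 1 + ζ(y,t) + y∂_yζ(y,t) > 0 in a neighborhood of (y,t). Define H₁(y,t) = −(1+ζ)^{−2γ}(1+ζ+y∂_yζ)^{−γ} ∂_y((1+ζ)² y³ ∂_tζ) + ∂_y((1+ζ)^{−2} y³ ∂_tζ) and E₀(a,b) = (1/(γ−1))[(1+a)^{2−2γ}(1+a+b)^{1−γ} − 3(γ−1)(1+a)^{−1} + (γ−1)(1+a)^{−2} b + (3γ−4)]. Then H₁(y,t) = ∂_t [ y² E₀(ζ(y,t), y∂_yζ(y,t)) ]. -/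
/-!
Write u = 1 + ζ, v = 1 + ζ + y ζ_y and split
E₀(a, b) = (γ-1)⁻¹ (1+a)^(2-2γ) (1+a+b)^(1-γ) + ((1+a)^(-2) b - 3 (1+a)^(-1)) + const.
Along t, with a = ζ and b = y ζ_y, the first piece of y² E₀ has derivative
-u^(-2γ) v^(-γ) · y² (2 u v ζ_t + u² (ζ_t + y ζ_yt)) and the second
y² (u^(-2) (y ζ_yt + 3 ζ_t) - 2 u^(-3) ζ_t y ζ_y). Since v = u + y ζ_y, these are exactly
-u^(-2γ) v^(-γ) ∂_y(u² y³ ζ_t) and ∂_y(u^(-2) y³ ζ_t), once ζ_ty = ζ_yt, which holds because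
ζ is C².
-/

open Real Set

section PartialDerivatives

variable {E : Type*} [NormedAddCommGroup E] [NormedSpace ℝ E] {f : ℝ → ℝ → E} {x y : ℝ}

lemma hasDerivAt_partial_fst (hf : DifferentiableAt ℝ (fun p : ℝ × ℝ => f p.1 p.2) (x, y)) :
    HasDerivAt (fun a => f a y) (fderiv ℝ (fun p : ℝ × ℝ => f p.1 p.2) (x, y) (1, 0)) x :=
  hf.hasFDerivAt.comp_hasDerivAt (f := fun a => (a, y)) x
    ((hasDerivAt_id' x).prodMk (hasDerivAt_const x y))

lemma hasDerivAt_partial_snd (hf : DifferentiableAt ℝ (fun p : ℝ × ℝ => f p.1 p.2) (x, y)) :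
    HasDerivAt (fun b => f x b) (fderiv ℝ (fun p : ℝ × ℝ => f p.1 p.2) (x, y) (0, 1)) y :=
  hf.hasFDerivAt.comp_hasDerivAt (f := fun b => (x, b)) y
    ((hasDerivAt_const y x).prodMk (hasDerivAt_id' y))

lemma ContDiffAt.hasDerivAt_deriv_snd
    (hf : ContDiffAt ℝ 2 (fun p : ℝ × ℝ => f p.1 p.2) (x, y)) :
    HasDerivAt (fun a => deriv (fun b => f a b) y)
      (fderiv ℝ (fderiv ℝ (fun p : ℝ × ℝ => f p.1 p.2)) (x, y) (1, 0) (0, 1)) x := by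
  have hdiff : ∀ᶠ p in nhds (x, y), DifferentiableAt ℝ (fun p : ℝ × ℝ => f p.1 p.2) p :=
    (hf.eventually (by simp)).mono fun p hp => hp.differentiableAt two_ne_zero
  have hf' := ((hf.fderiv_right (m := 1) le_rfl).differentiableAt one_ne_zero).hasFDerivAt
  have h := (hf'.comp_hasDerivAt (f := fun a => (a, y)) x
    ((hasDerivAt_id' x).prodMk (hasDerivAt_const x y))).clm_apply
    (hasDerivAt_const x ((0 : ℝ), (1 : ℝ)))
  simp only [map_zero, add_zero] at h
  refine h.congr_of_eventuallyEq ?_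
  filter_upwards [(continuous_id.prodMk continuous_const).continuousAt.eventually hdiff]
    with a ha using (hasDerivAt_partial_snd ha).deriv

lemma ContDiffAt.hasDerivAt_deriv_fst
    (hf : ContDiffAt ℝ 2 (fun p : ℝ × ℝ => f p.1 p.2) (x, y)) :
    HasDerivAt (fun b => deriv (fun a => f a b) x)
      (fderiv ℝ (fderiv ℝ (fun p : ℝ × ℝ => f p.1 p.2)) (x, y) (1, 0) (0, 1)) y := by
  have hdiff : ∀ᶠ p in nhds (x, y), DifferentiableAt ℝ (fun p : ℝ × ℝ => f p.1 p.2) p :=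
    (hf.eventually (by simp)).mono fun p hp => hp.differentiableAt two_ne_zero
  have hf' := ((hf.fderiv_right (m := 1) le_rfl).differentiableAt one_ne_zero).hasFDerivAt
  have h := (hf'.comp_hasDerivAt (f := fun b => (x, b)) y
    ((hasDerivAt_const y x).prodMk (hasDerivAt_id' y))).clm_apply
    (hasDerivAt_const y ((1 : ℝ), (0 : ℝ)))
  simp only [map_zero, add_zero] at h
  rw [hf.isSymmSndFDerivAt (by simp)]
  refine h.congr_of_eventuallyEq ?_
  filter_upwards [(continuous_const.prodMk continuous_id).continuousAt.eventually hdiff]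
    with b hb using (hasDerivAt_partial_fst hb).deriv

end PartialDerivatives

section EnergyDensity

variable {γ t a' b' : ℝ} {a b : ℝ → ℝ}

noncomputable def energyDensity (γ a b : ℝ) : ℝ :=
  (1 / (γ - 1)) * ((1 + a) ^ (2 - 2 * γ) * (1 + a + b) ^ (1 - γ)
    - 3 * (γ - 1) * (1 + a) ^ (-1 : ℝ) + (γ - 1) * (1 + a) ^ (-2 : ℝ) * b + (3 * γ - 4))

lemma energyDensity_eq (hγ : γ ≠ 1) (a b : ℝ) :
    energyDensity γ a b = (1 + a) ^ (2 - 2 * γ) * (1 + a + b) ^ (1 - γ) / (γ - 1)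
      + ((1 + a) ^ (-2 : ℝ) * b - 3 * (1 + a) ^ (-1 : ℝ)) + (3 * γ - 4) / (γ - 1) := by
  have : γ - 1 ≠ 0 := sub_ne_zero.2 hγ
  unfold energyDensity
  field_simp
  ring

lemma hasDerivAt_energyDensity_rpowPart (hγ : γ ≠ 1) (ha : HasDerivAt a a' t)
    (hb : HasDerivAt b b' t) (h₁ : 0 < 1 + a t) (h₂ : 0 < 1 + a t + b t) :
    HasDerivAt (fun s => (1 + a s) ^ (2 - 2 * γ) * (1 + a s + b s) ^ (1 - γ) / (γ - 1))
      (-((1 + a t) ^ (-(2 * γ)) * (1 + a t + b t) ^ (-γ)) *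
        (2 * (1 + a t) * (1 + a t + b t) * a' + (1 + a t) ^ 2 * (a' + b'))) t := by
  have ha₁ : HasDerivAt (fun s => 1 + a s) a' t := ha.const_add 1
  have hb₁ : HasDerivAt (fun s => 1 + a s + b s) (a' + b') t := ha₁.add hb
  refine (((ha₁.rpow_const (p := 2 - 2 * γ) (.inl h₁.ne')).mul
    (hb₁.rpow_const (p := 1 - γ) (.inl h₂.ne'))).div_const (γ - 1)).congr_deriv ?_
  have : γ - 1 ≠ 0 := sub_ne_zero.2 hγ
  -- express every power through (1 + a t) ^ (-(2 * γ)) and (1 + a t + b t) ^ (-γ)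
  rw [show 2 - 2 * γ - 1 = 1 + -(2 * γ) by ring,
    show 2 - 2 * γ = (2 : ℕ) + -(2 * γ) by push_cast; ring,
    show 1 - γ - 1 = -γ by ring, show 1 - γ = 1 + -γ by ring,
    rpow_add h₁, rpow_add h₁, rpow_add h₂, rpow_one, rpow_one, rpow_natCast]
  field_simp
  ring

lemma hasDerivAt_energyDensity_rationalPart (ha : HasDerivAt a a' t) (hb : HasDerivAt b b' t)
    (h₁ : 0 < 1 + a t) :
    HasDerivAt (fun s => (1 + a s) ^ (-2 : ℝ) * b s - 3 * (1 + a s) ^ (-1 : ℝ))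
      ((1 + a t) ^ (-2 : ℝ) * (b' + 3 * a') - 2 * (1 + a t) ^ (-3 : ℝ) * a' * b t) t := by
  have ha₁ : HasDerivAt (fun s => 1 + a s) a' t := ha.const_add 1
  refine (((ha₁.rpow_const (p := -2) (.inl h₁.ne')).mul hb).sub
    ((ha₁.rpow_const (p := -1) (.inl h₁.ne')).const_mul 3)).congr_deriv ?_
  norm_num
  ring

lemma hasDerivAt_energyDensity (hγ : γ ≠ 1) (ha : HasDerivAt a a' t) (hb : HasDerivAt b b' t)
    (h₁ : 0 < 1 + a t) (h₂ : 0 < 1 + a t + b t) :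
    HasDerivAt (fun s => energyDensity γ (a s) (b s))
      (-((1 + a t) ^ (-(2 * γ)) * (1 + a t + b t) ^ (-γ)) *
          (2 * (1 + a t) * (1 + a t + b t) * a' + (1 + a t) ^ 2 * (a' + b'))
        + ((1 + a t) ^ (-2 : ℝ) * (b' + 3 * a') - 2 * (1 + a t) ^ (-3 : ℝ) * a' * b t)) t := by
  simp_rw [energyDensity_eq hγ]
  exact ((hasDerivAt_energyDensity_rpowPart hγ ha hb h₁ h₂).add
    (hasDerivAt_energyDensity_rationalPart ha hb h₁)).add_const _

end EnergyDensity

lemma energy_identity_of_hasDerivAt {γ y t P Q M : ℝ} {ζ : ℝ → ℝ → ℝ} (hγ : γ ≠ 1)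
    (hζy : HasDerivAt (fun a => ζ a t) P y) (hζt : HasDerivAt (fun s => ζ y s) Q t)
    (hMy : HasDerivAt (fun a => deriv (fun s => ζ a s) t) M y)
    (hMt : HasDerivAt (fun s => deriv (fun a => ζ a s) y) M t)
    (hu : 0 < 1 + ζ y t) (hv : 0 < 1 + ζ y t + y * P) :
    -(1 + ζ y t) ^ (-(2 * γ)) * (1 + ζ y t + y * deriv (fun a => ζ a t) y) ^ (-γ) *
        deriv (fun a => (1 + ζ a t) ^ 2 * a ^ 3 * deriv (fun s => ζ a s) t) y
      + deriv (fun a => (1 + ζ a t) ^ (-2 : ℝ) * a ^ 3 * deriv (fun s => ζ a s) t) y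
      = deriv (fun s => y ^ 2 * energyDensity γ (ζ y s) (y * deriv (fun a => ζ a s) y)) t := by
  have hu₁ : HasDerivAt (fun a => 1 + ζ a t) P y := hζy.const_add 1
  have hyM : HasDerivAt (fun s => y * deriv (fun a => ζ a s) y) (y * M) t := hMt.const_mul y
  have hflux : HasDerivAt (fun a => (1 + ζ a t) ^ 2 * a ^ 3 * deriv (fun s => ζ a s) t) _ y :=
    ((hu₁.pow 2).mul (hasDerivAt_pow 3 y)).mul hMy
  have hflux' :
      HasDerivAt (fun a => (1 + ζ a t) ^ (-2 : ℝ) * a ^ 3 * deriv (fun s => ζ a s) t) _ y :=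
    ((hu₁.rpow_const (.inl hu.ne')).mul (hasDerivAt_pow 3 y)).mul hMy
  have henergy :=
    (hasDerivAt_energyDensity hγ hζt hyM hu (by rwa [hζy.deriv])).const_mul (y ^ 2)
  rw [hflux.deriv, hflux'.deriv, henergy.deriv, hζy.deriv, hζt.deriv,
    show (-2 : ℝ) - 1 = -3 by norm_num]
  simp only [Pi.pow_apply, Pi.mul_apply]
  ring

theorem stmt_14_general (γ : ℝ) (hγ : 1 < γ) (U : Set (ℝ × ℝ)) (hU : IsOpen U)
    (ζ : ℝ → ℝ → ℝ)
    (hζ : ContDiffOn ℝ 2 (fun p : ℝ × ℝ => ζ p.1 p.2) U)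
    (y t : ℝ) (hyt : (y, t) ∈ U)
    (hpos : ∀ᶠ p : ℝ × ℝ in nhds (y, t),
      0 < 1 + ζ p.1 p.2 ∧ 0 < 1 + ζ p.1 p.2 + p.1 * deriv (fun a => ζ a p.2) p.1) :
    let ζy : ℝ → ℝ → ℝ := fun a b => deriv (fun a' => ζ a' b) a;
    let ζt : ℝ → ℝ → ℝ := fun a b => deriv (fun b' => ζ a b') b;
    let E₀ : ℝ → ℝ → ℝ := fun a b =>
      (1 / (γ - 1)) * ((1 + a) ^ (2 - 2 * γ) * (1 + a + b) ^ (1 - γ)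
        - 3 * (γ - 1) * (1 + a) ^ (-1 : ℝ) + (γ - 1) * (1 + a) ^ (-2 : ℝ) * b + (3 * γ - 4));
    -(1 + ζ y t) ^ (-(2 * γ)) * (1 + ζ y t + y * ζy y t) ^ (-γ) *
        deriv (fun a => (1 + ζ a t) ^ 2 * a ^ 3 * ζt a t) y
      + deriv (fun a => (1 + ζ a t) ^ (-2 : ℝ) * a ^ 3 * ζt a t) y
      = deriv (fun s => y ^ 2 * E₀ (ζ y s) (y * ζy y s)) t := by
  have hC2 : ContDiffAt ℝ 2 (fun p : ℝ × ℝ => ζ p.1 p.2) (y, t) :=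
    hζ.contDiffAt (hU.mem_nhds hyt)
  have hdiff := hC2.differentiableAt two_ne_zero
  have hζy := hasDerivAt_partial_fst hdiff
  obtain ⟨hu, hv⟩ := hpos.self_of_nhds
  rw [hζy.deriv] at hv
  exact energy_identity_of_hasDerivAt hγ.ne' hζy (hasDerivAt_partial_snd hdiff)
    hC2.hasDerivAt_deriv_snd hC2.hasDerivAt_deriv_fst hu hv

/-- Pointwise energy identity for the basic estimate: for a C² perturbation ζ on an open set
U ⊆ ℝ², at any point (y,t) ∈ U with y ≠ 0 and the physical positivity conditions holding
near (y,t), the quantity H₁(y,t) equals the time derivative of y² E₀(ζ, y∂_yζ). -/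
theorem stmt_14 (γ : ℝ) (hγ : 1 < γ) (U : Set (ℝ × ℝ)) (hU : IsOpen U)
    (ζ : ℝ → ℝ → ℝ)
    (hζ : ContDiffOn ℝ 2 (fun p : ℝ × ℝ => ζ p.1 p.2) U)
    (y t : ℝ) (hyt : (y, t) ∈ U) (hy : y ≠ 0)
    (hpos : ∀ᶠ p : ℝ × ℝ in nhds (y, t),
      0 < 1 + ζ p.1 p.2 ∧ 0 < 1 + ζ p.1 p.2 + p.1 * deriv (fun a => ζ a p.2) p.1) :
    let ζy : ℝ → ℝ → ℝ := fun a b => deriv (fun a' => ζ a' b) a;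
    let ζt : ℝ → ℝ → ℝ := fun a b => deriv (fun b' => ζ a b') b;
    let E₀ : ℝ → ℝ → ℝ := fun a b =>
      (1 / (γ - 1)) * ((1 + a) ^ (2 - 2 * γ) * (1 + a + b) ^ (1 - γ)
        - 3 * (γ - 1) * (1 + a) ^ (-1 : ℝ) + (γ - 1) * (1 + a) ^ (-2 : ℝ) * b + (3 * γ - 4));
    -(1 + ζ y t) ^ (-(2 * γ)) * (1 + ζ y t + y * ζy y t) ^ (-γ) *
        deriv (fun a => (1 + ζ a t) ^ 2 * a ^ 3 * ζt a t) y
      + deriv (fun a => (1 + ζ a t) ^ (-2 : ℝ) * a ^ 3 * ζt a t) y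
      = deriv (fun s => y ^ 2 * E₀ (ζ y s) (y * ζy y s)) t :=
  stmt_14_general γ hγ U hU ζ hζ y t hyt hpos
end

section
/- Two-sided quadratic bound for the higher-order energy density E_j: suppose γ > 4/3. Define, for real a, b with 1+a > 0 and 1+a+b > 0, the coefficients h₁(a,b) = (2−2γ)(1+a)^{1−2γ}(1+a+b)^{−γ} − γ(1+a)^{2−2γ}(1+a+b)^{−γ−1} + 2(1+a)^{−3}, h₂(a,b) = −γ(1+a)^{2−2γ}(1+a+b)^{−γ−1}, h₃(a,b) = (1−2γ)(1+a)^{−2γ}(1+a+b)^{−γ} − γ(1+a)^{1−2γ}(1+a+b)^{−γ−1} − 3(1+a)^{−4}, and the quadratic form E(a,b,X,Y) = −(1/2)[ (3h₁(a,b) + 2h₃(a,b)b) X² + 2h₁(a,b) XY + h₂(a,b) Y² ]. Then there exist ε ∈ (0, 1/2) and C ≥ 1, depending only on γ, such that for all a, b with |a| ≤ ε, |b| ≤ ε and all real X, Y: C^{−1}(X² + Y²) ≤ E(a,b,X,Y) ≤ C(X² + Y²). -/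
open Real Set

set_option maxHeartbeats 1000000 in
/-- Two-sided quadratic bound for the higher-order energy density E_j: for γ > 4/3 there are
ε ∈ (0, 1/2) and C ≥ 1 (depending only on γ) such that
C⁻¹(X²+Y²) ≤ E(a,b,X,Y) ≤ C(X²+Y²) whenever |a| ≤ ε, |b| ≤ ε. -/
theorem stmt_18 (γ : ℝ) (hγ : 4 / 3 < γ) :
    let h₁ : ℝ → ℝ → ℝ := fun a b =>
      (2 - 2 * γ) * (1 + a) ^ (1 - 2 * γ) * (1 + a + b) ^ (-γ)
        - γ * (1 + a) ^ (2 - 2 * γ) * (1 + a + b) ^ (-γ - 1) + 2 * (1 + a) ^ (-3 : ℝ);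
    let h₂ : ℝ → ℝ → ℝ := fun a b => -γ * (1 + a) ^ (2 - 2 * γ) * (1 + a + b) ^ (-γ - 1);
    let h₃ : ℝ → ℝ → ℝ := fun a b =>
      (1 - 2 * γ) * (1 + a) ^ (-(2 * γ)) * (1 + a + b) ^ (-γ)
        - γ * (1 + a) ^ (1 - 2 * γ) * (1 + a + b) ^ (-γ - 1) - 3 * (1 + a) ^ (-4 : ℝ);
    let E : ℝ → ℝ → ℝ → ℝ → ℝ := fun a b X Y =>
      -(1 / 2) * ((3 * h₁ a b + 2 * h₃ a b * b) * X ^ 2 + 2 * h₁ a b * X * Y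
        + h₂ a b * Y ^ 2);
    ∃ ε ∈ Ioo (0 : ℝ) (1 / 2), ∃ C : ℝ, 1 ≤ C ∧
      ∀ a b X Y : ℝ, |a| ≤ ε → |b| ≤ ε →
        C⁻¹ * (X ^ 2 + Y ^ 2) ≤ E a b X Y ∧ E a b X Y ≤ C * (X ^ 2 + Y ^ 2) := by
  intro h₁ h₂ h₃ E
  obtain ⟨s, hs_def⟩ : ∃ s : ℝ, s = 3 * γ - 4 := ⟨_, rfl⟩
  have hs0 : 0 < s := by rw [hs_def]; linarith
  have hγ0 : 0 < γ := by linarith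
  -- δ : admissible perturbation of coefficients
  have hden : (0:ℝ) < 5 * s + γ + 1 := by linarith
  obtain ⟨δ, hδ0, hδ1, hδ2⟩ : ∃ δ : ℝ, 0 < δ ∧ δ ≤ 1 ∧ δ * (5 * s + γ + 1) ≤ 2 * s := by
    refine ⟨min 1 (2 * s / (5 * s + γ + 1)), lt_min one_pos (by positivity),
      min_le_left _ _, ?_⟩
    have h : min 1 (2 * s / (5 * s + γ + 1)) ≤ 2 * s / (5 * s + γ + 1) := min_le_right _ _
    calc min 1 (2 * s / (5 * s + γ + 1)) * (5 * s + γ + 1)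
        ≤ (2 * s / (5 * s + γ + 1)) * (5 * s + γ + 1) :=
          mul_le_mul_of_nonneg_right h hden.le
      _ = 2 * s := by field_simp
  have hδs : δ ≤ s := by nlinarith
  -- coefficient functions
  set f₁ : ℝ × ℝ → ℝ := fun p => -(3 * h₁ p.1 p.2 + 2 * h₃ p.1 p.2 * p.2) with hf₁
  set f₂ : ℝ × ℝ → ℝ := fun p => -(h₁ p.1 p.2) with hf₂
  set f₃ : ℝ × ℝ → ℝ := fun p => -(h₂ p.1 p.2) with hf₃
  -- continuity ingredients
  have cb1 : ContinuousAt (fun p : ℝ × ℝ => 1 + p.1) (0, 0) :=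
    (continuousAt_const.add continuousAt_fst)
  have cb2 : ContinuousAt (fun p : ℝ × ℝ => 1 + p.1 + p.2) (0, 0) :=
    ((continuousAt_const.add continuousAt_fst).add continuousAt_snd)
  have cp : ∀ e : ℝ, ContinuousAt (fun p : ℝ × ℝ => (1 + p.1) ^ e) (0, 0) :=
    fun e => cb1.rpow_const (Or.inl (by norm_num))
  have cq : ∀ e : ℝ, ContinuousAt (fun p : ℝ × ℝ => (1 + p.1 + p.2) ^ e) (0, 0) :=
    fun e => cb2.rpow_const (Or.inl (by norm_num))
  have ch₁ : ContinuousAt (fun p : ℝ × ℝ => h₁ p.1 p.2) (0, 0) := by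
    simp only [h₁]
    exact (((continuousAt_const.mul (cp _)).mul (cq _)).sub
      ((continuousAt_const.mul (cp _)).mul (cq _))).add (continuousAt_const.mul (cp _))
  have ch₂ : ContinuousAt (fun p : ℝ × ℝ => h₂ p.1 p.2) (0, 0) := by
    simp only [h₂]
    exact (continuousAt_const.mul (cp _)).mul (cq _)
  have ch₃ : ContinuousAt (fun p : ℝ × ℝ => h₃ p.1 p.2) (0, 0) := by
    simp only [h₃]
    exact (((continuousAt_const.mul (cp _)).mul (cq _)).sub
      ((continuousAt_const.mul (cp _)).mul (cq _))).sub (continuousAt_const.mul (cp _))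
  have cf₁ : ContinuousAt f₁ (0, 0) :=
    ((continuousAt_const.mul ch₁).add ((continuousAt_const.mul ch₃).mul continuousAt_snd)).neg
  have cf₂ : ContinuousAt f₂ (0, 0) := ch₁.neg
  have cf₃ : ContinuousAt f₃ (0, 0) := ch₂.neg
  -- values at the origin
  have e₁ : h₁ 0 0 = 4 - 3 * γ := by
    simp only [h₁, add_zero, Real.one_rpow]; ring
  have e₂ : h₂ 0 0 = -γ := by
    simp only [h₂, add_zero, Real.one_rpow]; ring
  have v₁ : f₁ (0, 0) = 3 * s := by
    simp only [hf₁]; rw [e₁, hs_def]; ring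
  have v₂ : f₂ (0, 0) = s := by
    simp only [hf₂]; rw [e₁, hs_def]; ring
  have v₃ : f₃ (0, 0) = γ := by
    simp only [hf₃]; rw [e₂]; ring
  -- extract ε's
  obtain ⟨ε₁, hε₁, hb₁⟩ := Metric.continuousAt_iff.mp cf₁ δ hδ0
  obtain ⟨ε₂, hε₂, hb₂⟩ := Metric.continuousAt_iff.mp cf₂ δ hδ0
  obtain ⟨ε₃, hε₃, hb₃⟩ := Metric.continuousAt_iff.mp cf₃ δ hδ0
  obtain ⟨ε, hεpos, hεq, hεm⟩ :
      ∃ ε : ℝ, 0 < ε ∧ ε ≤ 1/4 ∧ 2 * ε ≤ min ε₁ (min ε₂ ε₃) := by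
    have hmin : 0 < min ε₁ (min ε₂ ε₃) := lt_min hε₁ (lt_min hε₂ hε₃)
    refine ⟨min (min ε₁ (min ε₂ ε₃) / 2) (1/4), ?_, min_le_right _ _, ?_⟩
    · exact lt_min (by linarith) (by norm_num)
    · have h := min_le_left (min ε₁ (min ε₂ ε₃) / 2) (1/4:ℝ)
      linarith
  -- the constant
  obtain ⟨T, hT_def⟩ : ∃ T : ℝ, T = 3 * s + γ + 2 := ⟨_, rfl⟩
  have hT0 : 0 < T := by rw [hT_def]; linarith
  obtain ⟨C, hC_def⟩ : ∃ C : ℝ, C = T / s + (4 * s + γ + 3) / 2 := ⟨_, rfl⟩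
  have hTs : (3:ℝ) ≤ T / s := by
    rw [le_div_iff₀ hs0, hT_def]; linarith
  have hC1 : 1 ≤ C := by
    have h2 : (0:ℝ) ≤ (4 * s + γ + 3) / 2 := by positivity
    rw [hC_def]; linarith
  refine ⟨ε, ⟨hεpos, lt_of_le_of_lt hεq (by norm_num)⟩, C, hC1, ?_⟩
  intro a b X Y ha hb
  -- distance control
  have hdist : ∀ e : ℝ, min ε₁ (min ε₂ ε₃) ≤ e → dist ((a, b) : ℝ × ℝ) (0, 0) < e := by
    intro e he
    rw [Prod.dist_eq]
    simp only [Real.dist_eq, sub_zero]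
    have hm : max |a| |b| ≤ ε := max_le ha hb
    calc max |a| |b| ≤ ε := hm
      _ < 2 * ε := by linarith
      _ ≤ e := le_trans hεm he
  have hd₁ := hb₁ (hdist ε₁ (min_le_left _ _))
  have hd₂ := hb₂ (hdist ε₂ (le_trans (min_le_right _ _) (min_le_left _ _)))
  have hd₃ := hb₃ (hdist ε₃ (le_trans (min_le_right _ _) (min_le_right _ _)))
  rw [v₁, Real.dist_eq] at hd₁
  rw [v₂, Real.dist_eq] at hd₂
  rw [v₃, Real.dist_eq] at hd₃
  obtain ⟨A, hA_def⟩ : ∃ A : ℝ, A = f₁ (a, b) := ⟨_, rfl⟩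
  obtain ⟨B, hB_def⟩ : ∃ B : ℝ, B = f₂ (a, b) := ⟨_, rfl⟩
  obtain ⟨D, hD_def⟩ : ∃ D : ℝ, D = f₃ (a, b) := ⟨_, rfl⟩
  rw [← hA_def] at hd₁
  rw [← hB_def] at hd₂
  rw [← hD_def] at hd₃
  have hA := abs_le.mp hd₁.le
  have hB := abs_le.mp hd₂.le
  have hD := abs_le.mp hd₃.le
  -- E in terms of A B D
  have hE : E a b X Y = (1/2) * (A * X^2 + 2 * B * X * Y + D * Y^2) := by
    rw [hA_def, hB_def, hD_def, hf₁, hf₂, hf₃]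
    show -(1 / 2) * ((3 * h₁ a b + 2 * h₃ a b * b) * X ^ 2 + 2 * h₁ a b * X * Y
        + h₂ a b * Y ^ 2) = _
    ring
  rw [hE]
  clear hA_def hB_def hD_def hd₁ hd₂ hd₃ hE
  clear hb₁ hb₂ hb₃ cf₁ cf₂ cf₃ ch₁ ch₂ ch₃ cp cq cb1 cb2 e₁ e₂ v₁ v₂ v₃ hdist
  clear hf₁ hf₂ hf₃ f₁ f₂ f₃ E h₃ h₂ h₁ ha hb hε₁ hε₂ hε₃ hεpos hεq hεm
  -- coefficient bounds
  have hA1 : 2 * s ≤ A := by linarith [hA.1]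
  have hA2 : A ≤ 3 * s + 1 := by linarith [hA.2]
  have hD1 : γ - 1 ≤ D := by linarith [hD.1]
  have hD2 : D ≤ γ + 1 := by linarith [hD.2]
  have hD0 : (1:ℝ)/3 < D := by linarith
  have hB1 : -(s + 1) ≤ B := by linarith [hB.1]
  have hB2 : B ≤ s + 1 := by linarith [hB.2]
  have hid : 3 * s * γ - s ^ 2 = 4 * s := by rw [hs_def]; ring
  have hADlb : (3 * s - δ) * (γ - δ) ≤ A * D :=
    mul_le_mul (by linarith [hA.1]) (by linarith [hD.1]) (by linarith) (by linarith)
  have hBsq : B ^ 2 ≤ (s + δ) ^ 2 := by nlinarith [hB.1, hB.2]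
  have hdisc : 2 * s ≤ A * D - B ^ 2 := by nlinarith [hADlb, hBsq, hid, hδ2, hδ0]
  -- key quadratic identity bound
  have hQkey : 2 * s * (X^2 + Y^2) ≤ (A + D) * (A * X^2 + 2 * B * X * Y + D * Y^2) := by
    nlinarith [sq_nonneg (A * X + B * Y), sq_nonneg (B * X + D * Y),
      mul_nonneg (by linarith : (0:ℝ) ≤ A * D - B^2 - 2 * s)
        (by positivity : (0:ℝ) ≤ X^2 + Y^2)]
  have hAD0 : 0 < A + D := by linarith
  have hQ0 : 0 ≤ A * X^2 + 2 * B * X * Y + D * Y^2 := by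
    nlinarith [mul_nonneg (by positivity : (0:ℝ) ≤ 2*s) (by positivity : (0:ℝ) ≤ X^2+Y^2)]
  have hADT : A + D ≤ T := by rw [hT_def]; linarith
  have hQT : 2 * s * (X^2 + Y^2) ≤ T * (A * X^2 + 2 * B * X * Y + D * Y^2) :=
    le_trans hQkey (mul_le_mul_of_nonneg_right hADT hQ0)
  constructor
  · -- lower bound
    have hCinv : C⁻¹ ≤ s / T := by
      have h1 : T / s ≤ C := by
        have h2 : (0:ℝ) ≤ (4 * s + γ + 3) / 2 := by positivity
        rw [hC_def]; linarith
      have h2 : (0:ℝ) < T / s := by positivity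
      calc C⁻¹ ≤ (T / s)⁻¹ := inv_anti₀ h2 h1
        _ = s / T := by rw [inv_div]
    calc C⁻¹ * (X ^ 2 + Y ^ 2) ≤ (s / T) * (X^2 + Y^2) :=
          mul_le_mul_of_nonneg_right hCinv (by positivity)
      _ ≤ (1/2) * (A * X^2 + 2 * B * X * Y + D * Y^2) := by
          rw [div_mul_eq_mul_div, div_le_iff₀ hT0]
          nlinarith [hQT]
  · -- upper bound
    have hCu : (4 * s + γ + 3) / 2 ≤ C := by
      rw [hC_def]
      have : (0:ℝ) < T / s := by positivity
      linarith
    nlinarith [mul_nonneg (by linarith : (0:ℝ) ≤ s + 1 + B) (sq_nonneg (X - Y)),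
      mul_nonneg (by linarith : (0:ℝ) ≤ s + 1 - B) (sq_nonneg (X + Y)),
      mul_nonneg (by linarith : (0:ℝ) ≤ 3 * s + 1 - A) (sq_nonneg X),
      mul_nonneg (by linarith : (0:ℝ) ≤ γ + 1 - D) (sq_nonneg Y),
      mul_nonneg (by linarith : (0:ℝ) ≤ C - (4 * s + γ + 3) / 2)
        (by positivity : (0:ℝ) ≤ X^2 + Y^2)]
end

section
/- Two-sided quadratic bound for the higher-order dissipation density D_j: suppose γ > 4/3. Define, for real a, b with 1+a > 0 and 1+a+b > 0, the coefficients h₁(a,b) = (2−2γ)(1+a)^{1−2γ}(1+a+b)^{−γ} − γ(1+a)^{2−2γ}(1+a+b)^{−γ−1} + 2(1+a)^{−3}, h₂(a,b) = −γ(1+a)^{2−2γ}(1+a+b)^{−γ−1}, h₃(a,b) = (1−2γ)(1+a)^{−2γ}(1+a+b)^{−γ} − γ(1+a)^{1−2γ}(1+a+b)^{−γ−1} − 3(1+a)^{−4}, and the quadratic form D(a,b,X,Y) = −(h₁(a,b)X + h₂(a,b)Y)(3X + Y) + (3h₂(a,b) − h₁(a,b)) XY − 2h₃(a,b) b X². Then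 there exist ε ∈ (0, 1/2), c > 0 and C > 0, depending only on γ, such that for all a, b with |a| ≤ ε, |b| ≤ ε and all real X, Y: c(X² + Y²) ≤ D(a,b,X,Y) ≤ C(X² + Y²). -/
/-!
For fixed `(a, b)` the density `D(a, b, ·, ·)` is the binary quadratic form
`A X² + B XY + E Y²` with `A = -3h₁ - 2h₃b`, `B = -2h₁`, `E = -h₂`, whose coefficients depend
continuously on `(a, b)` near the origin. At `(a, b) = (0, 0)` it is
`3s X² + 2s XY + γ Y²` with `s = 3γ - 4`, which is positive definite as soon as `s > 0`
(its discriminant `4s² - 12sγ = -16s` is negative). Positive definiteness, with uniform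
constants, survives small perturbations of the coefficients.
-/

open Real Set Filter Topology

def binQuad (A B E X Y : ℝ) : ℝ := A * X ^ 2 + B * X * Y + E * Y ^ 2

theorem binQuad_sub_binQuad (A B E A' B' E' X Y : ℝ) :
    binQuad A B E X Y - binQuad A' B' E' X Y = binQuad (A - A') (B - B') (E - E') X Y := by
  unfold binQuad; ring

theorem binQuad_nonneg {A B E : ℝ} (hA : 0 ≤ A) (hE : 0 ≤ E) (hdisc : B ^ 2 ≤ 4 * A * E)
    (X Y : ℝ) : 0 ≤ binQuad A B E X Y := by
  unfold binQuad
  rcases hA.eq_or_lt with rfl | hA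
  · obtain rfl : B = 0 := by nlinarith
    nlinarith
  · have : 0 ≤ 4 * A * (A * X ^ 2 + B * X * Y + E * Y ^ 2) := by
      nlinarith [sq_nonneg (2 * A * X + B * Y), sq_nonneg Y]
    nlinarith

theorem exists_pos_mul_le_binQuad {A B E : ℝ} (hA : 0 < A) (hdisc : B ^ 2 < 4 * A * E) :
    ∃ m > 0, ∀ X Y : ℝ, m * (X ^ 2 + Y ^ 2) ≤ binQuad A B E X Y := by
  have hE : 0 < E := by nlinarith [sq_nonneg B]
  -- This `m` makes `(A - m)(E - m) ≥ AE - m(A + E) = B²/4`, so `q - m(X² + Y²)` stays semidefinite.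
  obtain ⟨m, hm_pos, hm⟩ : ∃ m > 0, m * (4 * (A + E)) = 4 * A * E - B ^ 2 :=
    ⟨(4 * A * E - B ^ 2) / (4 * (A + E)), by positivity, div_mul_cancel₀ _ (by positivity)⟩
  refine ⟨m, hm_pos, fun X Y => sub_nonneg.1 ?_⟩
  have hsemidef := binQuad_nonneg (B := B) (A := A - m) (E := E - m)
    (by nlinarith [sq_nonneg B]) (by nlinarith [sq_nonneg B]) (by nlinarith) X Y
  convert hsemidef using 1
  unfold binQuad; ring

theorem abs_binQuad_le {A B E K : ℝ} (hA : |A| ≤ K) (hB : |B| ≤ K) (hE : |E| ≤ K) (X Y : ℝ) :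
    |binQuad A B E X Y| ≤ 2 * K * (X ^ 2 + Y ^ 2) := by
  have hK : 0 ≤ K := (abs_nonneg A).trans hA
  have hXY : |X * Y| ≤ X ^ 2 + Y ^ 2 := by
    rw [abs_le]; constructor <;> nlinarith [sq_nonneg (X + Y), sq_nonneg (X - Y)]
  calc |binQuad A B E X Y| ≤ |A * X ^ 2| + |B * (X * Y)| + |E * Y ^ 2| := by
        unfold binQuad; rw [mul_assoc B]; exact abs_add_three _ _ _
    _ = |A| * X ^ 2 + |B| * |X * Y| + |E| * Y ^ 2 := by
        simp only [abs_mul, abs_sq]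
    _ ≤ K * X ^ 2 + K * (X ^ 2 + Y ^ 2) + K * Y ^ 2 := by gcongr
    _ = 2 * K * (X ^ 2 + Y ^ 2) := by ring

theorem eventually_binQuad_bounds {α : Type*} [TopologicalSpace α] {A B E : α → ℝ} {p : α}
    (hA : ContinuousAt A p) (hB : ContinuousAt B p) (hE : ContinuousAt E p)
    (hpos : 0 < A p) (hdisc : B p ^ 2 < 4 * A p * E p) :
    ∃ c > 0, ∃ C > 0, ∀ᶠ x in 𝓝 p, ∀ X Y : ℝ,
      c * (X ^ 2 + Y ^ 2) ≤ binQuad (A x) (B x) (E x) X Y ∧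
        binQuad (A x) (B x) (E x) X Y ≤ C * (X ^ 2 + Y ^ 2) := by
  obtain ⟨m, hm, hm_le⟩ := exists_pos_mul_le_binQuad hpos hdisc
  set K := |A p| + |B p| + |E p| + m / 4 with hK
  refine ⟨m / 2, by positivity, 2 * K, by positivity, ?_⟩
  have near : ∀ {f : α → ℝ}, ContinuousAt f p → ∀ᶠ x in 𝓝 p, |f x - f p| ≤ m / 4 :=
    fun hf => hf.eventually (Metric.closedBall_mem_nhds _ (by positivity))
  filter_upwards [near hA, near hB, near hE] with x hAx hBx hEx X Y
  constructor
  · have hdiff := abs_binQuad_le hAx hBx hEx X Y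
    rw [← binQuad_sub_binQuad] at hdiff
    linarith [(abs_le.1 hdiff).1, hm_le X Y]
  · refine (le_abs_self _).trans (abs_binQuad_le ?_ ?_ ?_ X Y) <;>
      linarith [abs_sub_abs_le_abs_sub (A x) (A p), abs_sub_abs_le_abs_sub (B x) (B p),
        abs_sub_abs_le_abs_sub (E x) (E p), abs_nonneg (A p), abs_nonneg (B p), abs_nonneg (E p), hK]

theorem exists_forall_abs_le_of_eventually {P : ℝ × ℝ → Prop} (h : ∀ᶠ x in 𝓝 (0, 0), P x)
    {r : ℝ} (hr : 0 < r) : ∃ ε ∈ Ioo 0 r, ∀ a b : ℝ, |a| ≤ ε → |b| ≤ ε → P (a, b) := by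
  obtain ⟨δ, hδ, hball⟩ := Metric.nhds_basis_closedBall.eventually_iff.1 h
  refine ⟨min δ (r / 2), ⟨by positivity, by linarith [min_le_right δ (r / 2)]⟩, ?_⟩
  intro a b ha hb
  apply hball
  rw [← closedBall_prod_same]
  constructor <;> simpa [Real.dist_eq] using le_trans ‹_› (min_le_left δ (r / 2))

/-- Two-sided quadratic bound for the higher-order dissipation density D_j: for γ > 4/3 there
are ε ∈ (0, 1/2), c > 0 and C > 0 (depending only on γ) such that
c(X²+Y²) ≤ D(a,b,X,Y) ≤ C(X²+Y²) whenever |a| ≤ ε, |b| ≤ ε. -/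
theorem stmt_19 (γ : ℝ) (hγ : 4 / 3 < γ) :
    let h₁ : ℝ → ℝ → ℝ := fun a b =>
      (2 - 2 * γ) * (1 + a) ^ (1 - 2 * γ) * (1 + a + b) ^ (-γ)
        - γ * (1 + a) ^ (2 - 2 * γ) * (1 + a + b) ^ (-γ - 1) + 2 * (1 + a) ^ (-3 : ℝ);
    let h₂ : ℝ → ℝ → ℝ := fun a b => -γ * (1 + a) ^ (2 - 2 * γ) * (1 + a + b) ^ (-γ - 1);
    let h₃ : ℝ → ℝ → ℝ := fun a b =>
      (1 - 2 * γ) * (1 + a) ^ (-(2 * γ)) * (1 + a + b) ^ (-γ)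
        - γ * (1 + a) ^ (1 - 2 * γ) * (1 + a + b) ^ (-γ - 1) - 3 * (1 + a) ^ (-4 : ℝ);
    let D : ℝ → ℝ → ℝ → ℝ → ℝ := fun a b X Y =>
      -(h₁ a b * X + h₂ a b * Y) * (3 * X + Y) + (3 * h₂ a b - h₁ a b) * X * Y
        - 2 * h₃ a b * b * X ^ 2;
    ∃ ε ∈ Ioo (0 : ℝ) (1 / 2), ∃ c : ℝ, 0 < c ∧ ∃ C : ℝ, 0 < C ∧
      ∀ a b X Y : ℝ, |a| ≤ ε → |b| ≤ ε →
        c * (X ^ 2 + Y ^ 2) ≤ D a b X Y ∧ D a b X Y ≤ C * (X ^ 2 + Y ^ 2) := by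
  intro h₁ h₂ h₃ D
  have hD : ∀ a b X Y, D a b X Y =
      binQuad (-3 * h₁ a b - 2 * h₃ a b * b) (-2 * h₁ a b) (-h₂ a b) X Y := by
    intro a b X Y; simp only [D, binQuad]; ring
  have h₁_zero : h₁ 0 0 = 4 - 3 * γ := by simp only [h₁]; norm_num; ring
  have h₂_zero : h₂ 0 0 = -γ := by simp only [h₂]; norm_num
  obtain ⟨c, hc, C, hC, hbounds⟩ := eventually_binQuad_bounds (p := ((0 : ℝ), (0 : ℝ)))
    (A := fun p => -3 * h₁ p.1 p.2 - 2 * h₃ p.1 p.2 * p.2) (B := fun p => -2 * h₁ p.1 p.2)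
    (E := fun p => -h₂ p.1 p.2)
    (by simp only [h₁, h₃]; fun_prop (disch := norm_num))
    (by simp only [h₁]; fun_prop (disch := norm_num))
    (by simp only [h₂]; fun_prop (disch := norm_num))
    (by simp only [h₁_zero, mul_zero, sub_zero]; linarith)
    (by simp only [h₁_zero, h₂_zero, mul_zero, sub_zero]; nlinarith)
  obtain ⟨ε, hε, hε_bounds⟩ := exists_forall_abs_le_of_eventually hbounds one_half_pos
  refine ⟨ε, hε, c, hc, C, hC, fun a b X Y ha hb => ?_⟩
  rw [hD]
  exact hε_bounds a b ha hb X Y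
end
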